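/- A Banach space X has the p-sequentially Right property if and only if for every Banach space Y, the adjoint of every Dunford-Pettis p-convergent operator T : X → Y is weakly compact; equivalently, it suffices to verify this for Y = ℓ∞. -/

import Mathlib

open Filter Topology NormedSpace Bornology
open scoped ENNReal ContinuousMap ZeroAtInfty

/-- A sequence is weakly null. -/
def WeaklyNull {X : Type*} [NormedAddCommGroup X] [NormedSpace ℝ X] (x : ℕ → X) : Prop :=
  ∀ f : StrongDual ℝ X, Tendsto (fun n => f (x n)) atTop (𝓝 0)

/-- A sequence is weakly `p`-summable; for `p = ∞` this means weakly null. -/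
def WeaklyPSummable {X : Type*} [NormedAddCommGroup X] [NormedSpace ℝ X] (p : ℝ≥0∞)
    (x : ℕ → X) : Prop :=
  if p = ∞ then WeaklyNull x else ∀ f : StrongDual ℝ X, Memℓp (fun n => f (x n)) p

/-- A Dunford-Pettis subset of a Banach space: a bounded set on which every weakly null
sequence of functionals converges uniformly to zero. -/
def IsDunfordPettisSet {X : Type*} [NormedAddCommGroup X] [NormedSpace ℝ X] (A : Set X) : Prop :=
  IsBounded A ∧ ∀ f : ℕ → StrongDual ℝ X, WeaklyNull f →
    Tendsto (fun n => ⨆ a : A, |f n a.1|) atTop (𝓝 0)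

/-- A `p`-Right null sequence: weakly `p`-summable and a Dunford-Pettis set. -/
def PRightNull {X : Type*} [NormedAddCommGroup X] [NormedSpace ℝ X] (p : ℝ≥0∞)
    (x : ℕ → X) : Prop :=
  WeaklyPSummable p x ∧ IsDunfordPettisSet (Set.range x)

/-- A `p`-Right subset of the dual: every `p`-Right null sequence in `X` converges to `0`
uniformly on `K`. -/
def IsPRightSet {X : Type*} [NormedAddCommGroup X] [NormedSpace ℝ X] (p : ℝ≥0∞)
    (K : Set (StrongDual ℝ X)) : Prop :=
  IsBounded K ∧ ∀ x : ℕ → X, PRightNull p x →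
    Tendsto (fun n => ⨆ f : K, |f.1 (x n)|) atTop (𝓝 0)

/-- A `p`-Right* subset of `X`: every `p`-Right null sequence in `X*` converges to `0`
uniformly on `K`. -/
def IsPRightStarSet {X : Type*} [NormedAddCommGroup X] [NormedSpace ℝ X] (p : ℝ≥0∞)
    (K : Set X) : Prop :=
  IsBounded K ∧ ∀ f : ℕ → StrongDual ℝ X, PRightNull p f →
    Tendsto (fun n => ⨆ a : K, |f n a.1|) atTop (𝓝 0)

/-- A `p`-(V) subset of the dual. -/
def IsPVSet {X : Type*} [NormedAddCommGroup X] [NormedSpace ℝ X] (p : ℝ≥0∞)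
    (K : Set (StrongDual ℝ X)) : Prop :=
  IsBounded K ∧ ∀ x : ℕ → X, WeaklyPSummable p x →
    Tendsto (fun n => ⨆ f : K, |f.1 (x n)|) atTop (𝓝 0)

/-- A `p`-(V*) subset of `X`. -/
def IsPVStarSet {X : Type*} [NormedAddCommGroup X] [NormedSpace ℝ X] (p : ℝ≥0∞)
    (K : Set X) : Prop :=
  IsBounded K ∧ ∀ f : ℕ → StrongDual ℝ X, WeaklyPSummable p f →
    Tendsto (fun n => ⨆ a : K, |f n a.1|) atTop (𝓝 0)

/-- A Dunford-Pettis `p`-convergent operator maps `p`-Right null sequences to norm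
null sequences. -/
def DPpConvergent {X Y : Type*} [NormedAddCommGroup X] [NormedSpace ℝ X] [NormedAddCommGroup Y]
    [NormedSpace ℝ Y] (p : ℝ≥0∞) (T : X →L[ℝ] Y) : Prop :=
  ∀ x : ℕ → X, PRightNull p x → Tendsto (fun n => ‖T (x n)‖) atTop (𝓝 0)

/-- The adjoint of a bounded operator between normed spaces. -/
noncomputable def adjointOp {X Y : Type*} [NormedAddCommGroup X] [NormedSpace ℝ X]
    [NormedAddCommGroup Y] [NormedSpace ℝ Y] (T : X →L[ℝ] Y) : StrongDual ℝ Y →L[ℝ] StrongDual ℝ X :=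
  (ContinuousLinearMap.compL ℝ X Y ℝ).flip T

/-- Weak convergence of a sequence. -/
def WeaklyConvTo {X : Type*} [NormedAddCommGroup X] [NormedSpace ℝ X] (x : ℕ → X) (a : X) : Prop :=
  ∀ f : StrongDual ℝ X, Tendsto (fun n => f (x n)) atTop (𝓝 (f a))

/-- A relatively weakly compact set (sequentially): every sequence in `A` has a weakly
convergent subsequence with limit in the space. -/
def RelWeaklyCompact {X : Type*} [NormedAddCommGroup X] [NormedSpace ℝ X] (A : Set X) : Prop :=
  ∀ x : ℕ → X, (∀ n, x n ∈ A) →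
    ∃ a : X, ∃ φ : ℕ → ℕ, StrictMono φ ∧ WeaklyConvTo (fun n => x (φ n)) a

/-- A relatively weakly `q`-compact set: every sequence in `A` has a weakly `q`-convergent
subsequence with limit in the space. -/
def RelWeaklyQCompact {X : Type*} [NormedAddCommGroup X] [NormedSpace ℝ X] (q : ℝ≥0∞)
    (A : Set X) : Prop :=
  ∀ x : ℕ → X, (∀ n, x n ∈ A) →
    ∃ a : X, ∃ φ : ℕ → ℕ, StrictMono φ ∧ WeaklyPSummable q (fun n => x (φ n) - a)

/-- The `p`-sequentially Right property: every `p`-Right subset of the dual is relatively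
weakly compact. -/
def PSR (p : ℝ≥0∞) (X : Type*) [NormedAddCommGroup X] [NormedSpace ℝ X] : Prop :=
  ∀ K : Set (StrongDual ℝ X), IsPRightSet p K → RelWeaklyCompact K

/-- The `p`-sequentially Right* property: every `p`-Right* subset is relatively weakly
compact. -/
def PSRStar (p : ℝ≥0∞) (X : Type*) [NormedAddCommGroup X] [NormedSpace ℝ X] : Prop :=
  ∀ K : Set X, IsPRightStarSet p K → RelWeaklyCompact K

section AuxStmt7

variable {X : Type} [NormedAddCommGroup X] [NormedSpace ℝ X]

lemma adjointOp_apply {Y : Type*} [NormedAddCommGroup Y] [NormedSpace ℝ Y]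
    (T : X →L[ℝ] Y) (g : StrongDual ℝ Y) (x : X) : adjointOp T g x = g (T x) := rfl

/-- The image of the unit ball under the adjoint of a DP `p`-convergent operator is a
`p`-Right set. -/
lemma aux_pright_image {p : ℝ≥0∞} {Y : Type*} [NormedAddCommGroup Y] [NormedSpace ℝ Y]
    (T : X →L[ℝ] Y) (hT : DPpConvergent p T) :
    IsPRightSet p (adjointOp T '' Metric.closedBall 0 1) := by
  constructor
  · apply (Metric.isBounded_closedBall (x := (0 : StrongDual ℝ X)) (r := ‖T‖)).subset
    rintro - ⟨g, hg, rfl⟩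
    rw [Metric.mem_closedBall, dist_zero_right]
    calc ‖adjointOp T g‖ ≤ ‖g‖ * ‖T‖ := ContinuousLinearMap.opNorm_comp_le _ _
      _ ≤ 1 * ‖T‖ := by
          apply mul_le_mul_of_nonneg_right _ (norm_nonneg T)
          simpa [dist_zero_right] using hg
      _ = ‖T‖ := one_mul _
  · intro x hx
    apply squeeze_zero (g := fun n => ‖T (x n)‖) _ _ (hT x hx)
    · intro n
      exact Real.iSup_nonneg fun f => abs_nonneg _
    · intro n
      apply Real.iSup_le _ (norm_nonneg _)
      rintro ⟨-, g, hg, rfl⟩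
      calc |adjointOp T g (x n)| = ‖g (T (x n))‖ := rfl
        _ ≤ ‖g‖ * ‖T (x n)‖ := g.le_opNorm _
        _ ≤ 1 * ‖T (x n)‖ := by
            apply mul_le_mul_of_nonneg_right _ (norm_nonneg _)
            simpa [dist_zero_right] using hg
        _ = ‖T (x n)‖ := one_mul _

/-- The operator `X → ℓ∞` built from a bounded sequence of functionals. -/
noncomputable def opOf (f : ℕ → StrongDual ℝ X) (C : ℝ) (hC : ∀ n, ‖f n‖ ≤ C) :
    X →L[ℝ] lp (fun _ : ℕ => ℝ) ∞ :=
  LinearMap.mkContinuous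
    { toFun := fun x => ⟨fun n => f n x, memℓp_infty (by
        refine ⟨C * ‖x‖, ?_⟩
        rintro - ⟨n, rfl⟩
        calc ‖f n x‖ ≤ ‖f n‖ * ‖x‖ := (f n).le_opNorm x
          _ ≤ C * ‖x‖ := mul_le_mul_of_nonneg_right (hC n) (norm_nonneg x))⟩
      map_add' := fun x y => lp.ext (by funext n; simp; rfl)
      map_smul' := fun c x => lp.ext (by funext n; simp) }
    (max C 0)
    (by
      intro x
      apply lp.norm_le_of_forall_le (by positivity)
      intro n
      calc ‖f n x‖ ≤ ‖f n‖ * ‖x‖ := (f n).le_opNorm x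
        _ ≤ C * ‖x‖ := mul_le_mul_of_nonneg_right (hC n) (norm_nonneg x)
        _ ≤ max C 0 * ‖x‖ := mul_le_mul_of_nonneg_right (le_max_left _ _) (norm_nonneg x))

lemma opOf_apply (f : ℕ → StrongDual ℝ X) (C : ℝ) (hC : ∀ n, ‖f n‖ ≤ C) (x : X) (n : ℕ) :
    (opOf f C hC x : ∀ _ : ℕ, ℝ) n = f n x := rfl

/-- Evaluation at coordinate `n` as a functional on `ℓ∞`. -/
noncomputable def evalInfty (n : ℕ) : StrongDual ℝ (lp (fun _ : ℕ => ℝ) ∞) :=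
  LinearMap.mkContinuous
    { toFun := fun g => g n
      map_add' := fun g h => by
        show ((g + h : lp _ _) : ∀ _ : ℕ, ℝ) n = _
        rw [lp.coeFn_add]; rfl
      map_smul' := fun c g => by
        show ((c • g : lp _ _) : ∀ _ : ℕ, ℝ) n = _
        rw [lp.coeFn_smul]; rfl }
    1
    (fun g => by
      rw [one_mul]
      exact lp.norm_apply_le_norm ENNReal.top_ne_zero g n)

lemma evalInfty_norm_le (n : ℕ) : ‖evalInfty n‖ ≤ 1 :=
  LinearMap.mkContinuous_norm_le _ zero_le_one _

end AuxStmt7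

/-- `X` has the `p`-sequentially Right property iff the adjoint of every
Dunford-Pettis `p`-convergent operator from `X` into any Banach space `Y` is weakly
compact; equivalently it suffices to take `Y = ℓ∞`. -/
theorem stmt7 {p : ℝ≥0∞} (hp : 1 ≤ p) {X : Type} [NormedAddCommGroup X] [NormedSpace ℝ X]
    [CompleteSpace X] :
    (PSR p X ↔
      ∀ (Y : Type) (_ : NormedAddCommGroup Y) (_ : NormedSpace ℝ Y) (_ : CompleteSpace Y)
        (T : X →L[ℝ] Y), DPpConvergent p T →
          RelWeaklyCompact (adjointOp T '' Metric.closedBall 0 1)) ∧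
    (PSR p X ↔
      ∀ T : X →L[ℝ] lp (fun _ : ℕ => ℝ) ∞, DPpConvergent p T →
        RelWeaklyCompact (adjointOp T '' Metric.closedBall 0 1)) := by
  -- PSR implies the statement for every Banach space Y
  have h1 : PSR p X → ∀ (Y : Type) (_ : NormedAddCommGroup Y) (_ : NormedSpace ℝ Y)
      (_ : CompleteSpace Y) (T : X →L[ℝ] Y), DPpConvergent p T →
        RelWeaklyCompact (adjointOp T '' Metric.closedBall 0 1) := by
    intro hX Y _ _ _ T hT
    exact hX _ (aux_pright_image T hT)
  -- the ℓ∞ statement implies PSR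
  have h3 : (∀ T : X →L[ℝ] lp (fun _ : ℕ => ℝ) ∞, DPpConvergent p T →
      RelWeaklyCompact (adjointOp T '' Metric.closedBall 0 1)) → PSR p X := by
    intro h K hK g hg
    obtain ⟨C, hC⟩ := isBounded_iff_forall_norm_le.1 hK.1
    have hC' : ∀ n, ‖g n‖ ≤ C := fun n => hC _ (hg n)
    set T := opOf g C hC' with hTdef
    have hTDP : DPpConvergent p T := by
      intro x hx
      apply squeeze_zero (g := fun n => ⨆ f : K, |f.1 (x n)|) _ _ (hK.2 x hx)
      · intro n; exact norm_nonneg _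
      · intro n
        have hnonneg : (0 : ℝ) ≤ ⨆ f : K, |f.1 (x n)| :=
          Real.iSup_nonneg fun f => abs_nonneg _
        apply lp.norm_le_of_forall_le hnonneg
        intro m
        have hbdd : BddAbove (Set.range fun f : K => |f.1 (x n)|) := by
          refine ⟨C * ‖x n‖, ?_⟩
          rintro - ⟨⟨f, hf⟩, rfl⟩
          calc |f (x n)| = ‖f (x n)‖ := rfl
            _ ≤ ‖f‖ * ‖x n‖ := f.le_opNorm _
            _ ≤ C * ‖x n‖ := mul_le_mul_of_nonneg_right (hC f hf) (norm_nonneg _)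
        calc ‖(T (x n) : ∀ _ : ℕ, ℝ) m‖ = |g m (x n)| := rfl
          _ ≤ ⨆ f : K, |f.1 (x n)| := le_ciSup hbdd (⟨g m, hg m⟩ : K)
    have hRWC := h T hTDP
    have hge : ∀ n, adjointOp T (evalInfty n) = g n := by
      intro n
      ext x
      rfl
    have hmem : ∀ n, adjointOp T (evalInfty n) ∈ adjointOp T '' Metric.closedBall 0 1 := by
      intro n
      exact ⟨evalInfty n, by simpa [dist_zero_right] using evalInfty_norm_le n, rfl⟩
    obtain ⟨a, φ, hφ, hconv⟩ := hRWC (fun n => adjointOp T (evalInfty n)) hmem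
    refine ⟨a, φ, hφ, ?_⟩
    have : (fun n => adjointOp T (evalInfty (φ n))) = fun n => g (φ n) := by
      funext n; exact hge (φ n)
    rwa [this] at hconv
  haveI : Fact ((1 : ℝ≥0∞) ≤ ∞) := ⟨le_top⟩
  refine ⟨⟨h1, fun h => h3 (h _ _ _ inferInstance)⟩, ⟨fun hX => h1 hX _ _ _ inferInstance, h3⟩⟩
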